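/- arXiv:2007.10131 — 6 statements merged into one kernel-verified Lean document; each statement's English description precedes it below -/
import Mathlib

section
/- For integers T ≥ 1, 0 ≤ k < T, and k < i < T, one has (1/(T-i))·Σ_{j=0}^{T-i-1} (T-i-j)/(T-j) ≤ (1/T)·(k + Σ_{j=1}^{T-k} j/(k+j)). -/
/-!
With `H x = ∑_{n=x+1}^{T} 1/n`, both sides are averages of terms `1 - c/n`: the left side equals
`1 - i/(T-i) · H i` and the right side `1 - k/T · H k`. Since `k/T ≤ k/(T-k)`, it suffices that
`x ↦ x/(T-x) · H x` is monotone on `x < T`. Checking one step `x → x+1` and clearing denominators,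
this reduces to `x (T-x-1)/(x+1) ≤ T · H (x+1)`, which holds because `H (x+1)` has `T-x-1` terms,
each at least `1/T`.
-/

open Finset

noncomputable def tailHarmonic (T x : ℕ) : ℝ := ∑ n ∈ Icc (x + 1) T, (n : ℝ)⁻¹

lemma tailHarmonic_nonneg (T x : ℕ) : 0 ≤ tailHarmonic T x :=
  sum_nonneg fun _ _ => by positivity

lemma tailHarmonic_eq_inv_add (T x : ℕ) (hx : x < T) :
    tailHarmonic T x = ((x : ℝ) + 1)⁻¹ + tailHarmonic T (x + 1) := by
  rw [tailHarmonic, ← insert_Icc_add_one_left_eq_Icc (by omega : x + 1 ≤ T),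
    sum_insert (by simp), Nat.cast_succ, tailHarmonic]

lemma sub_div_le_tailHarmonic (T x : ℕ) : ((T - x : ℕ) : ℝ) / T ≤ tailHarmonic T x := by
  have h : ∀ n ∈ Icc (x + 1) T, (T : ℝ)⁻¹ ≤ (n : ℝ)⁻¹ := fun n hn => by
    obtain ⟨hxn, hnT⟩ := mem_Icc.1 hn
    have : (0 : ℝ) < n := by exact_mod_cast (by omega : 0 < n)
    gcongr
  simpa [tailHarmonic, div_eq_mul_inv] using card_nsmul_le_sum _ _ _ h

lemma div_mul_tailHarmonic_le_succ (T x : ℕ) (hx : x + 1 < T) :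
    (x : ℝ) / (T - x) * tailHarmonic T x ≤
      (x + 1 : ℕ) / (T - (x + 1 : ℕ)) * tailHarmonic T (x + 1) := by
  have hxT : (x : ℝ) + 1 < T := by exact_mod_cast hx
  have hlow := sub_div_le_tailHarmonic T (x + 1)
  rw [Nat.cast_sub hx.le, div_le_iff₀ (by linarith)] at hlow
  rw [tailHarmonic_eq_inv_add T x (by omega), div_mul_eq_mul_div, div_mul_eq_mul_div,
    div_le_div_iff₀ (by linarith) (by push_cast; linarith)]
  push_cast at hlow ⊢
  have hx1 : (x : ℝ) * ((x : ℝ) + 1)⁻¹ ≤ 1 := by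
    rw [← div_eq_mul_inv, div_le_one₀ (by positivity)]
    linarith
  have key : (x : ℝ) * ((x : ℝ) + 1)⁻¹ * (T - (x + 1)) ≤ T * tailHarmonic T (x + 1) :=
    (mul_le_of_le_one_left (by linarith) hx1).trans (by linarith)
  linear_combination key

lemma monotoneOn_div_mul_tailHarmonic (T : ℕ) :
    MonotoneOn (fun x : ℕ => (x : ℝ) / (T - x) * tailHarmonic T x) (Set.Iio T) :=
  monotoneOn_of_le_succ Set.ordConnected_Iio fun x _ _ hx => by
    simp only [Order.succ_eq_add_one, Set.mem_Iio] at hx ⊢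
    exact div_mul_tailHarmonic_le_succ T x hx

lemma sum_Icc_one_sub_div (T x : ℕ) (hx : x ≤ T) :
    ∑ n ∈ Icc (x + 1) T, (1 - (x : ℝ) / n) = (T - x) - x * tailHarmonic T x := by
  simp [sum_sub_distrib, tailHarmonic, mul_sum, div_eq_mul_inv, Nat.cast_sub hx]

lemma sum_range_sub_eq_sum_Icc {M : Type*} [AddCommMonoid M] (f : ℕ → M) {T x : ℕ}
    (hx : x ≤ T) : ∑ j ∈ range (T - x), f (T - j) = ∑ n ∈ Icc (x + 1) T, f n := by
  refine sum_nbij' (fun j => T - j) (fun n => T - n) ?_ ?_ ?_ ?_ fun _ _ => rfl <;>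
    intro a ha <;> simp at ha ⊢ <;> omega

lemma sum_range_sub_sub_div (T i : ℕ) (hi : i ≤ T) :
    ∑ j ∈ range (T - i), ((T : ℝ) - i - j) / (T - j) = (T - i) - i * tailHarmonic T i := by
  rw [← sum_Icc_one_sub_div T i hi, ← sum_range_sub_eq_sum_Icc (fun n : ℕ => 1 - (i : ℝ) / n) hi]
  refine sum_congr rfl fun j hj => ?_
  have hjT : j < T := by simp at hj; omega
  have hjT' : (j : ℝ) < T := by exact_mod_cast hjT
  rw [Nat.cast_sub hjT.le, one_sub_div (by linarith)]
  ring

lemma sum_Icc_div_add (T k : ℕ) (hk : k ≤ T) :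
    ∑ j ∈ Icc 1 (T - k), (j : ℝ) / (k + j) = (T - k) - k * tailHarmonic T k := by
  have hIcc : Icc (k + 1) T = (Icc 1 (T - k)).map (addLeftEmbedding k) := by
    rw [map_add_left_Icc, add_comm, Nat.add_sub_cancel' hk]
  rw [← sum_Icc_one_sub_div T k hk, hIcc, sum_map]
  refine sum_congr rfl fun j hj => ?_
  have hj : (1 : ℝ) ≤ j := by simp at hj; exact_mod_cast hj.1
  rw [addLeftEmbedding_apply, Nat.cast_add, one_sub_div (by positivity), add_sub_cancel_left]

theorem stmt_1_general (T k i : ℕ) (hk : k < T) (hki : k < i) (hiT : i < T) :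
    (1 / ((T : ℝ) - (i : ℝ))) *
        ∑ j ∈ Finset.range (T - i), (((T : ℝ) - (i : ℝ) - (j : ℝ)) / ((T : ℝ) - (j : ℝ)))
      ≤ (1 / (T : ℝ)) * ((k : ℝ) + ∑ j ∈ Finset.Icc 1 (T - k), (j : ℝ) / ((k : ℝ) + (j : ℝ))) := by
  have hTi : (0 : ℝ) < T - i := sub_pos.2 (by exact_mod_cast hiT)
  have hTk : (0 : ℝ) < T - k := sub_pos.2 (by exact_mod_cast hk)
  have hT : (0 : ℝ) < T := by linarith [k.cast_nonneg (α := ℝ)]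
  have hmono := monotoneOn_div_mul_tailHarmonic T (Set.mem_Iio.2 hk) (Set.mem_Iio.2 hiT) hki.le
  have hweight : (k : ℝ) / T ≤ k / (T - k) := by
    gcongr
    linarith
  rw [sum_range_sub_sub_div T i hiT.le, sum_Icc_div_add T k hk.le]
  calc 1 / ((T : ℝ) - i) * ((T - i) - i * tailHarmonic T i)
      = 1 - i / (T - i) * tailHarmonic T i := by field_simp
    _ ≤ 1 - k / (T - k) * tailHarmonic T k := sub_le_sub_left hmono 1
    _ ≤ 1 - k / T * tailHarmonic T k :=
      sub_le_sub_left (mul_le_mul_of_nonneg_right hweight (tailHarmonic_nonneg T k)) 1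
    _ = 1 / T * (k + ((T - k) - k * tailHarmonic T k)) := by field_simp; ring

theorem stmt_1 (T k i : ℕ) (hT : 1 ≤ T) (hk : k < T) (hki : k < i) (hiT : i < T) :
    (1 / ((T : ℝ) - (i : ℝ))) *
        ∑ j ∈ Finset.range (T - i), (((T : ℝ) - (i : ℝ) - (j : ℝ)) / ((T : ℝ) - (j : ℝ)))
      ≤ (1 / (T : ℝ)) * ((k : ℝ) + ∑ j ∈ Finset.Icc 1 (T - k), (j : ℝ) / ((k : ℝ) + (j : ℝ))) :=
  stmt_1_general T k i hk hki hiT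
end

section
/- For any integers T ≥ 1 and 0 ≤ k ≤ T, (1/T)·(k + Σ_{j=1}^{T-k} j/(k+j)) ≥ 1 - 1/e. -/
/-!
With `n = T - k`, write `j / (k + j) = 1 - k / (k + j)`, so the bracket is `k + n - k ∑ 1 / (k + j)`.
The sum is at most `∫ₖ^{k+n} dx / x = log ((k + n) / k)`, and `x log (y / x) ≤ y / e` because
`e t ≤ eᵗ`. Hence the bracket is at least `(1 - 1/e)(k + n) ≥ (1 - 1/e) T`.
-/

open Real Finset

theorem sum_Icc_inv_add_le_log {k : ℝ} (hk : 0 < k) (n : ℕ) :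
    ∑ j ∈ Icc 1 n, (k + j)⁻¹ ≤ log ((k + n) / k) := calc
  ∑ j ∈ Icc 1 n, (k + j)⁻¹ = ∑ i ∈ range n, (k + ↑(i + 1))⁻¹ := by
    rw [range_eq_Ico, sum_Ico_add' (fun j : ℕ => (k + j)⁻¹) 0 n 1, zero_add,
      Ico_add_one_right_eq_Icc]
  _ ≤ ∫ x in k..k + n, x⁻¹ := (inv_antitoneOn_Icc_right hk).sum_le_integral
  _ = log ((k + n) / k) := integral_inv fun h => by
    rw [Set.uIcc_of_le (le_add_of_nonneg_right n.cast_nonneg)] at h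
    exact hk.not_ge h.1

theorem mul_log_div_le_div_exp_one {x y : ℝ} (hx : 0 < x) (hy : 0 < y) :
    x * log (y / x) ≤ y / exp 1 := by
  have h := exp_one_mul_le_exp (x := log (y / x))
  rw [exp_log (by positivity)] at h
  rw [le_div_iff₀ (exp_pos 1)]
  calc x * log (y / x) * exp 1 = x * (exp 1 * log (y / x)) := by ring
    _ ≤ x * (y / x) := by gcongr
    _ = y := by field_simp

theorem sum_Icc_div_add_eq_sub_mul_sum_inv {k : ℝ} (hk : 0 ≤ k) (n : ℕ) :
    ∑ j ∈ Icc 1 n, (j : ℝ) / (k + j) = n - k * ∑ j ∈ Icc 1 n, (k + j)⁻¹ := by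
  have hterm : ∀ j ∈ Icc 1 n, (j : ℝ) / (k + j) = 1 - k * (k + j)⁻¹ := fun j hj => by
    have : (0 : ℝ) < k + j := by
      have := (mem_Icc.mp hj).1
      positivity
    field_simp
    ring
  rw [sum_congr rfl hterm, sum_sub_distrib, sum_const, Nat.card_Icc, Nat.add_sub_cancel, nsmul_one,
    mul_sum]

theorem one_sub_inv_exp_mul_le_add_sum_div {k : ℝ} (hk : 0 ≤ k) (n : ℕ) :
    (1 - 1 / exp 1) * (k + n) ≤ k + ∑ j ∈ Icc 1 n, (j : ℝ) / (k + j) := by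
  rw [sum_Icc_div_add_eq_sub_mul_sum_inv hk]
  suffices k * ∑ j ∈ Icc 1 n, (k + j)⁻¹ ≤ (k + n) / exp 1 by
    rw [sub_mul, one_div_mul_eq_div]; linarith
  rcases hk.eq_or_lt with rfl | hk
  · simp only [zero_mul]; positivity
  calc k * ∑ j ∈ Icc 1 n, (k + j)⁻¹ ≤ k * log ((k + n) / k) := by
        gcongr; exact sum_Icc_inv_add_le_log hk n
    _ ≤ (k + n) / exp 1 := mul_log_div_le_div_exp_one hk (by positivity)

theorem stmt_8_general (T k : ℕ) (hT : 1 ≤ T) :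
    (1 / (T : ℝ)) * ((k : ℝ) + ∑ j ∈ Finset.Icc 1 (T - k), (j : ℝ) / ((k : ℝ) + (j : ℝ)))
      ≥ 1 - 1 / Real.exp 1 := by
  have hT0 : (0 : ℝ) < T := by exact_mod_cast hT
  have hTk : (T : ℝ) ≤ k + (T - k : ℕ) := by exact_mod_cast le_add_tsub
  have he : 0 ≤ 1 - 1 / exp 1 :=
    sub_nonneg.mpr ((div_le_one (exp_pos 1)).mpr (one_le_exp zero_le_one))
  rw [ge_iff_le, one_div_mul_eq_div, le_div_iff₀ hT0]
  calc (1 - 1 / exp 1) * T ≤ (1 - 1 / exp 1) * (k + (T - k : ℕ)) := by gcongr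
    _ ≤ _ := one_sub_inv_exp_mul_le_add_sum_div k.cast_nonneg (T - k)

theorem stmt_8 (T k : ℕ) (hT : 1 ≤ T) (hk : k ≤ T) :
    (1 / (T : ℝ)) * ((k : ℝ) + ∑ j ∈ Finset.Icc 1 (T - k), (j : ℝ) / ((k : ℝ) + (j : ℝ)))
      ≥ 1 - 1 / Real.exp 1 :=
  stmt_8_general T k hT
end

section
/- Suppose v₁, v₂ : [T] → ℝ are non-negative, satisfy Σ_{j=1}^{T} v₁(j) = 1, satisfy Σ_{j=1}^{l} v₁(j) + Σ_{j=1}^{T-l} v₂(j) ≤ 1 for all 0 ≤ l < T, and satisfy the inequality Σ_{i=1}^{T-k} (T-i+1)·v₂(i) ≥ Σ_{i=k+1}^{T} (T-i+1)·v₁(i) (the valid inequality with ℓ = 0). Then Σ_{j=1}^{k} v₁(j) + Σ_{j=1}^{T-k} v₂(j) ≥ 1/T. -/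
/-!
Put `A = ∑_{j ≤ k} v₁(j)` and `B = ∑_{j ≤ T-k} v₂(j)`. The weights `T - i + 1` lie in `[1, T]`,
so the valid inequality and the normalisation give `1 - A ≤ ∑_{i > k} (T-i+1) v₁(i) ≤ T B`.
Dividing by `T` (the dual solution `σ_T = μ_0 = 1/T`) gives `B ≥ (1 - A)/T`, hence
`A + B ≥ 1/T + A (1 - 1/T) ≥ 1/T`.
-/

open Finset

section WeightedSums

variable {ι R : Type*} [Semiring R] [PartialOrder R] [IsOrderedRing R] {s : Finset ι} {f w : ι → R}

theorem Finset.sum_le_sum_mul_of_one_le (hf : ∀ i ∈ s, 0 ≤ f i) (hw : ∀ i ∈ s, 1 ≤ w i) :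
    ∑ i ∈ s, f i ≤ ∑ i ∈ s, w i * f i :=
  sum_le_sum fun i hi => le_mul_of_one_le_left (hf i hi) (hw i hi)

theorem Finset.sum_mul_le_mul_sum_of_le {c : R} (hf : ∀ i ∈ s, 0 ≤ f i) (hw : ∀ i ∈ s, w i ≤ c) :
    ∑ i ∈ s, w i * f i ≤ c * ∑ i ∈ s, f i := by
  rw [mul_sum]
  exact sum_le_sum fun i hi => mul_le_mul_of_nonneg_right (hw i hi) (hf i hi)

end WeightedSums

theorem Finset.sum_Icc_one_add_sum_Icc_succ {M : Type*} [AddCommMonoid M] (f : ℕ → M) {k n : ℕ}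
    (hkn : k ≤ n) : ∑ i ∈ Icc 1 k, f i + ∑ i ∈ Icc (k + 1) n, f i = ∑ i ∈ Icc 1 n, f i := by
  simpa only [← Icc_add_one_left_eq_Ioc, zero_add] using sum_Ioc_consecutive f k.zero_le hkn

theorem one_div_le_add_of_one_sub_le_mul {a b T : ℝ} (ha : 0 ≤ a) (hT : 1 ≤ T)
    (h : 1 - a ≤ T * b) : 1 / T ≤ a + b := by
  rw [div_le_iff₀ (by linarith)]
  nlinarith

theorem stmt_12_general (T k : ℕ) (hk : k < T)
    (v1 v2 : ℕ → ℝ)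
    (hpos1 : ∀ j : ℕ, 1 ≤ j → j ≤ T → 0 ≤ v1 j)
    (hpos2 : ∀ j : ℕ, 1 ≤ j → j ≤ T → 0 ≤ v2 j)
    (hnorm : ∑ j ∈ Finset.Icc 1 T, v1 j = 1)
    (hvalid : ∑ i ∈ Finset.Icc 1 (T - k), ((T : ℝ) - (i : ℝ) + 1) * v2 i
      ≥ ∑ i ∈ Finset.Icc (k + 1) T, ((T : ℝ) - (i : ℝ) + 1) * v1 i) :
    (∑ j ∈ Finset.Icc 1 k, v1 j) + (∑ j ∈ Finset.Icc 1 (T - k), v2 j) ≥ 1 / (T : ℝ) := by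
  have hT : (1 : ℝ) ≤ T := by exact_mod_cast Nat.one_le_of_lt hk
  have hA : 0 ≤ ∑ j ∈ Icc 1 k, v1 j := sum_nonneg fun j hj => by
    rw [mem_Icc] at hj
    exact hpos1 j hj.1 (by omega)
  have htail : 1 - ∑ j ∈ Icc 1 k, v1 j
      ≤ ∑ i ∈ Icc (k + 1) T, ((T : ℝ) - i + 1) * v1 i := by
    rw [← eq_sub_of_add_eq' ((sum_Icc_one_add_sum_Icc_succ v1 hk.le).trans hnorm)]
    refine sum_le_sum_mul_of_one_le (fun i hi => ?_) (fun i hi => ?_) <;> rw [mem_Icc] at hi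
    · exact hpos1 i (by omega) hi.2
    · have : (i : ℝ) ≤ T := by exact_mod_cast hi.2
      linarith
  have hhead : ∑ i ∈ Icc 1 (T - k), ((T : ℝ) - i + 1) * v2 i ≤ T * ∑ j ∈ Icc 1 (T - k), v2 j := by
    refine sum_mul_le_mul_sum_of_le (fun i hi => ?_) (fun i hi => ?_) <;> rw [mem_Icc] at hi
    · exact hpos2 i hi.1 (by omega)
    · have : (1 : ℝ) ≤ i := by exact_mod_cast hi.1
      linarith
  exact one_div_le_add_of_one_sub_le_mul hA hT (by linarith)

theorem stmt_12 (T k : ℕ) (hT : 1 ≤ T) (hk : k < T)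
    (v1 v2 : ℕ → ℝ)
    (hpos1 : ∀ j : ℕ, 1 ≤ j → j ≤ T → 0 ≤ v1 j)
    (hpos2 : ∀ j : ℕ, 1 ≤ j → j ≤ T → 0 ≤ v2 j)
    (hnorm : ∑ j ∈ Finset.Icc 1 T, v1 j = 1)
    (hwel : ∀ l : ℕ, l < T →
      (∑ j ∈ Finset.Icc 1 l, v1 j) + (∑ j ∈ Finset.Icc 1 (T - l), v2 j) ≤ 1)
    (hvalid : ∑ i ∈ Finset.Icc 1 (T - k), ((T : ℝ) - (i : ℝ) + 1) * v2 i
      ≥ ∑ i ∈ Finset.Icc (k + 1) T, ((T : ℝ) - (i : ℝ) + 1) * v1 i) :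
    (∑ j ∈ Finset.Icc 1 k, v1 j) + (∑ j ∈ Finset.Icc 1 (T - k), v2 j) ≥ 1 / (T : ℝ) :=
  stmt_12_general T k hk v1 v2 hpos1 hpos2 hnorm hvalid
end

section
/- In the two-buyer sequential second-price auction, the forward utility of buyer i at any decision node x equals max_{j∈{1,2}} [v_j(x_j+1) + U(x+e_j)] - v_{-i}(x_{-i}+1) - u_{-i}(x+e_{-i}), where U(y) = u_1(y)+u_2(y). -/
/-- Forward utilities of the two buyers in the two-buyer sequential second-price
auction with `T` items, computed by backward induction (Gale–Stegeman model).
At a tie the item is given to buyer 1; this does not affect the utilities. -/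
noncomputable def util (T : ℕ) (v1 v2 : ℕ → ℝ) : ℕ → ℕ → ℝ × ℝ
  | x1, x2 =>
    if _h : T ≤ x1 + x2 then (0, 0)
    else
      let uL := util T v1 v2 (x1 + 1) x2
      let uR := util T v1 v2 x1 (x2 + 1)
      let b1 := v1 (x1 + 1) + uL.1 - uR.1
      let b2 := v2 (x2 + 1) + uR.2 - uL.2
      if b2 ≤ b1 then (v1 (x1 + 1) - b2 + uL.1, uL.2)
      else (uR.1, v2 (x2 + 1) - b1 + uR.2)
  termination_by x1 x2 => T - x1 - x2
  decreasing_by all_goals omega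

/-!
The difference of the two bids, `b1 - b2`, is the difference of the total surpluses
`v1 + U(x + e1)` and `v2 + U(x + e2)` of the two possible allocations of the current item.
So the higher bidder is the buyer whose win yields the larger surplus, and the winner's
utility, value minus the loser's bid plus continuation, rearranges to that maximal surplus
minus the loser's value and continuation utility; the loser's continuation utility
rearranges the same way.
-/

/-- One stage of the auction: the buyers have current values `a` and `b`, and continuation
utilities `L` if buyer 1 wins and `R` if buyer 2 wins. -/
noncomputable def stageUtil (a b : ℝ) (L R : ℝ × ℝ) : ℝ × ℝ :=
  if b + R.2 - L.2 ≤ a + L.1 - R.1 then (a - (b + R.2 - L.2) + L.1, L.2)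
  else (R.1, b - (a + L.1 - R.1) + R.2)

theorem stageUtil_eq_max (a b : ℝ) (L R : ℝ × ℝ) :
    stageUtil a b L R =
      (max (a + (L.1 + L.2)) (b + (R.1 + R.2)) - b - R.2,
        max (a + (L.1 + L.2)) (b + (R.1 + R.2)) - a - L.1) := by
  unfold stageUtil
  split_ifs with hbid
  · rw [max_eq_left (by linarith)]
    ext <;> dsimp only <;> ring
  · rw [max_eq_right (by linarith)]
    ext <;> dsimp only <;> ring

theorem util_of_lt {T : ℕ} (v1 v2 : ℕ → ℝ) {x1 x2 : ℕ} (hx : x1 + x2 < T) :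
    util T v1 v2 x1 x2 =
      stageUtil (v1 (x1 + 1)) (v2 (x2 + 1)) (util T v1 v2 (x1 + 1) x2)
        (util T v1 v2 x1 (x2 + 1)) := by
  rw [util, dif_neg (not_le.mpr hx)]
  rfl

theorem stmt_15 (T : ℕ) (v1 v2 : ℕ → ℝ) (x1 x2 : ℕ) (hx : x1 + x2 < T) :
    (util T v1 v2 x1 x2).1
        = max (v1 (x1 + 1) + ((util T v1 v2 (x1 + 1) x2).1 + (util T v1 v2 (x1 + 1) x2).2))
            (v2 (x2 + 1) + ((util T v1 v2 x1 (x2 + 1)).1 + (util T v1 v2 x1 (x2 + 1)).2))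
          - v2 (x2 + 1) - (util T v1 v2 x1 (x2 + 1)).2 ∧
      (util T v1 v2 x1 x2).2
        = max (v1 (x1 + 1) + ((util T v1 v2 (x1 + 1) x2).1 + (util T v1 v2 (x1 + 1) x2).2))
            (v2 (x2 + 1) + ((util T v1 v2 x1 (x2 + 1)).1 + (util T v1 v2 x1 (x2 + 1)).2))
          - v1 (x1 + 1) - (util T v1 v2 (x1 + 1) x2).1 := by
  rw [util_of_lt v1 v2 hx, stageUtil_eq_max]
  exact ⟨rfl, rfl⟩
end

section
/- Let P be a path from decision node x to a terminal node, with first step to x+e₁, and suppose the optimal welfare from x is attained by some allocation giving buyer 1 at least one item (∃k>0 with SW(k|x) = OPT(x)). If all incremental values are non-negative, then the efficiency of P is at least the efficiency of the subpath of P starting at x+e₁: Γ(P) ≥ Γ(P^{t(x)-1}). -/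
/-!
Moving from `x` to `x + e₁` hands item `x₁ + 1` to buyer 1 for good, so every allocation from
`x + e₁` is an allocation from `x` with buyer 1 winning one more item, whose welfare counted
from `x` is larger by exactly `v := v₁(x₁ + 1)`. Since the optimum from `x` gives buyer 1 an item, `OPT` drops by `v`
as well, and `(SW - v) / (OPT - v) ≤ SW / OPT` because `0 ≤ v ≤ SW ≤ OPT`.
-/

/-- Social welfare, from decision node `(x1, x2)` of a `T`-item two-buyer auction,
of the allocation in which buyer 1 wins exactly `k` more items (and buyer 2 the rest). -/
noncomputable def sw (T : ℕ) (v1 v2 : ℕ → ℝ) (x1 x2 k : ℕ) : ℝ :=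
  (∑ j ∈ Finset.Icc (x1 + 1) (x1 + k), v1 j) + ∑ j ∈ Finset.Icc (x2 + 1) (T - x1 - k), v2 j

/-- Optimal social welfare from node `(x1, x2)`. -/
noncomputable def opt (T : ℕ) (v1 v2 : ℕ → ℝ) (x1 x2 : ℕ) : ℝ :=
  (Finset.range (T - x1 - x2 + 1)).sup' (Finset.nonempty_range_iff.mpr (Nat.succ_ne_zero _))
    (fun k => sw T v1 v2 x1 x2 k)

/-- Efficiency of a path from node `(x1, x2)` ending at the terminal node in which
buyer 1 owns `y1` items in total. -/
noncomputable def eff (T : ℕ) (v1 v2 : ℕ → ℝ) (x1 x2 y1 : ℕ) : ℝ :=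
  if opt T v1 v2 x1 x2 = 0 then 1 else sw T v1 v2 x1 x2 (y1 - x1) / opt T v1 v2 x1 x2

lemma ite_sub_div_sub_le_ite_div {a b c : ℝ} (hc : 0 ≤ c) (hca : c ≤ a) (hab : a ≤ b) :
    (if b - c = 0 then 1 else (a - c) / (b - c)) ≤ if b = 0 then 1 else a / b := by
  rcases (sub_nonneg.mpr (hca.trans hab)).eq_or_lt with hbc | hbc
  · obtain rfl : b = c := by linarith
    obtain rfl : a = b := by linarith
    by_cases ha : a = 0 <;> simp [ha]
  · have hb : 0 < b := by linarith
    rw [if_neg hbc.ne', if_neg hb.ne', div_le_div_iff₀ hbc hb]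
    nlinarith

section Auction

variable (T : ℕ) (v1 v2 : ℕ → ℝ)

lemma sw_le_opt {x1 x2 k : ℕ} (hk : k ≤ T - x1 - x2) : sw T v1 v2 x1 x2 k ≤ opt T v1 v2 x1 x2 :=
  Finset.le_sup' _ (Finset.mem_range.mpr (by omega))

lemma v1_succ_le_sw (hv1 : ∀ j, 0 ≤ v1 j) (hv2 : ∀ j, 0 ≤ v2 j) {x1 k : ℕ} (hk : 0 < k)
    (x2 : ℕ) : v1 (x1 + 1) ≤ sw T v1 v2 x1 x2 k := by
  have hfirst : v1 (x1 + 1) ≤ ∑ j ∈ Finset.Icc (x1 + 1) (x1 + k), v1 j :=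
    Finset.single_le_sum (fun j _ => hv1 j) (Finset.mem_Icc.mpr ⟨le_rfl, by omega⟩)
  have hrest : 0 ≤ ∑ j ∈ Finset.Icc (x2 + 1) (T - x1 - k), v2 j :=
    Finset.sum_nonneg fun j _ => hv2 j
  unfold sw
  linarith

lemma sw_succ_left (x1 x2 k : ℕ) :
    sw T v1 v2 (x1 + 1) x2 k = sw T v1 v2 x1 x2 (k + 1) - v1 (x1 + 1) := by
  have hT : T - (x1 + 1) - k = T - x1 - (k + 1) := by omega
  have hIcc : Finset.Icc (x1 + 1) (x1 + (k + 1)) =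
      insert (x1 + 1) (Finset.Icc (x1 + 1 + 1) (x1 + 1 + k)) := by
    rw [← Finset.insert_Icc_add_one_left_eq_Icc (by omega)]
    congr 2
    omega
  rw [sw, sw, hT, hIcc, Finset.sum_insert (by simp)]
  ring

lemma opt_succ_left {x1 x2 k : ℕ} (hk : 0 < k) (hkt : k ≤ T - x1 - x2)
    (hkopt : sw T v1 v2 x1 x2 k = opt T v1 v2 x1 x2) :
    opt T v1 v2 (x1 + 1) x2 = opt T v1 v2 x1 x2 - v1 (x1 + 1) := by
  apply le_antisymm
  · refine Finset.sup'_le _ _ fun i hi => ?_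
    have hi : i + 1 ≤ T - x1 - x2 := by have := Finset.mem_range.mp hi; omega
    rw [sw_succ_left]
    linarith [sw_le_opt T v1 v2 hi]
  · have hpred := sw_le_opt T v1 v2 (x1 := x1 + 1) (x2 := x2) (k := k - 1) (by omega)
    rw [sw_succ_left, Nat.sub_add_cancel hk, hkopt] at hpred
    exact hpred

end Auction

theorem stmt_18_general (T : ℕ) (v1 v2 : ℕ → ℝ)
    (hv1 : ∀ j, 0 ≤ v1 j) (hv2 : ∀ j, 0 ≤ v2 j)
    (x1 x2 : ℕ)
    (hopt : ∃ k : ℕ, 0 < k ∧ k ≤ T - x1 - x2 ∧ sw T v1 v2 x1 x2 k = opt T v1 v2 x1 x2)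
    (y1 : ℕ) (hy1 : x1 + 1 ≤ y1) (hy2 : y1 ≤ T - x2) :
    eff T v1 v2 x1 x2 y1 ≥ eff T v1 v2 (x1 + 1) x2 y1 := by
  obtain ⟨k, hk, hkt, hkopt⟩ := hopt
  have hsw : sw T v1 v2 (x1 + 1) x2 (y1 - (x1 + 1)) =
      sw T v1 v2 x1 x2 (y1 - x1) - v1 (x1 + 1) := by
    rw [sw_succ_left, show y1 - (x1 + 1) + 1 = y1 - x1 by omega]
  unfold eff
  rw [hsw, opt_succ_left T v1 v2 hk hkt hkopt]
  exact ite_sub_div_sub_le_ite_div (hv1 _) (v1_succ_le_sw T v1 v2 hv1 hv2 (by omega) x2)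
    (sw_le_opt T v1 v2 (by omega))

theorem stmt_18 (T : ℕ) (v1 v2 : ℕ → ℝ)
    (hv1 : ∀ j, 0 ≤ v1 j) (hv2 : ∀ j, 0 ≤ v2 j)
    (x1 x2 : ℕ) (hx : x1 + x2 < T)
    (hopt : ∃ k : ℕ, 0 < k ∧ k ≤ T - x1 - x2 ∧ sw T v1 v2 x1 x2 k = opt T v1 v2 x1 x2)
    (y1 : ℕ) (hy1 : x1 + 1 ≤ y1) (hy2 : y1 ≤ T - x2) :
    eff T v1 v2 x1 x2 y1 ≥ eff T v1 v2 (x1 + 1) x2 y1 :=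
  stmt_18_general T v1 v2 hv1 hv2 x1 x2 hopt y1 hy1 hy2
end

section
/- Fix T ≥ 1, suppose for buyer 1 the incremental valuations are v₁(j) = 1 for all j, and for buyer 2 they are v₂(j) = (T-k-j+1)/(T-j+1) for 1 ≤ j ≤ T-k and 0 otherwise (where 0 ≤ k < T). Then the functions u₁(x₁,x₂) = (T-x₁-x₂)·(1 - v₂(x₂+1)) and u₂(x₁,x₂) = 0 satisfy the backward-induction equations for forward utilities in the two-buyer sequential second-price auction, and at every node (0,ℓ) with 0 ≤ ℓ < T-k the two buyers' bids tie. -/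
noncomputable def bid1 (T : ℕ) (v1 v2 : ℕ → ℝ) (x1 x2 : ℕ) : ℝ :=
  v1 (x1 + 1) + (util T v1 v2 (x1 + 1) x2).1 - (util T v1 v2 x1 (x2 + 1)).1

noncomputable def bid2 (T : ℕ) (v1 v2 : ℕ → ℝ) (x1 x2 : ℕ) : ℝ :=
  v2 (x2 + 1) + (util T v1 v2 x1 (x2 + 1)).2 - (util T v1 v2 (x1 + 1) x2).2

section ForwardUtilities

variable {T : ℕ} {v1 v2 : ℕ → ℝ} {x1 x2 : ℕ}

lemma util_of_le (h : T ≤ x1 + x2) : util T v1 v2 x1 x2 = (0, 0) := by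
  rw [util, dif_pos h]

lemma util_of_bid2_le_bid1 (h : x1 + x2 < T) (hbid : bid2 T v1 v2 x1 x2 ≤ bid1 T v1 v2 x1 x2) :
    util T v1 v2 x1 x2 =
      (v1 (x1 + 1) - bid2 T v1 v2 x1 x2 + (util T v1 v2 (x1 + 1) x2).1,
        (util T v1 v2 (x1 + 1) x2).2) := by
  rw [util, dif_neg (by omega)]
  exact if_pos hbid

lemma bid1_sub_bid2_of_util (hv1 : ∀ j, v1 j = 1)
    (hL : util T v1 v2 (x1 + 1) x2 =
      (((T : ℝ) - (x1 + 1 : ℕ) - x2) * (1 - v2 (x2 + 1)), 0))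
    (hR : util T v1 v2 x1 (x2 + 1) =
      (((T : ℝ) - x1 - (x2 + 1 : ℕ)) * (1 - v2 (x2 + 1 + 1)), 0)) :
    bid1 T v1 v2 x1 x2 - bid2 T v1 v2 x1 x2 =
      ((T : ℝ) - x1 - x2) * (1 - v2 (x2 + 1)) -
        ((T : ℝ) - x1 - x2 - 1) * (1 - v2 (x2 + 2)) := by
  simp only [bid1, bid2, hL, hR, hv1]
  push_cast
  ring

theorem util_eq_of_bid_gap_nonneg (hv1 : ∀ j, v1 j = 1)
    (hgap : ∀ x1 x2 : ℕ, x1 + x2 < T →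
      ((T : ℝ) - x1 - x2 - 1) * (1 - v2 (x2 + 2)) ≤ ((T : ℝ) - x1 - x2) * (1 - v2 (x2 + 1)))
    (x1 x2 : ℕ) (h : x1 + x2 ≤ T) :
    util T v1 v2 x1 x2 = (((T : ℝ) - x1 - x2) * (1 - v2 (x2 + 1)), 0) := by
  rcases h.eq_or_lt with hT | hlt
  · have hc : (T : ℝ) - x1 - x2 = 0 := by rw [← hT]; push_cast; ring
    rw [util_of_le hT.ge, hc, zero_mul]
  · have hL := util_eq_of_bid_gap_nonneg hv1 hgap (x1 + 1) x2 (by omega)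
    have hR := util_eq_of_bid_gap_nonneg hv1 hgap x1 (x2 + 1) (by omega)
    have hbid := bid1_sub_bid2_of_util hv1 hL hR
    have hwin : bid2 T v1 v2 x1 x2 ≤ bid1 T v1 v2 x1 x2 := by
      linarith [hgap x1 x2 hlt]
    have hpay : bid2 T v1 v2 x1 x2 = v2 (x2 + 1) := by simp [bid2, hL, hR]
    rw [util_of_bid2_le_bid1 hlt hwin, hL, hpay, hv1]
    push_cast
    congr 1
    ring
termination_by T - x1 - x2

end ForwardUtilities

section DecreasingValuation

variable {T k : ℕ} {v2 : ℕ → ℝ}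
  (hv2 : ∀ j : ℕ, 1 ≤ j → j ≤ T - k →
    v2 j = ((T : ℝ) - (k : ℝ) - (j : ℝ) + 1) / ((T : ℝ) - (j : ℝ) + 1))
  (hv2' : ∀ j : ℕ, T - k < j → v2 j = 0)
include hv2 hv2'

lemma sub_mul_one_sub_v2_succ {j : ℕ} (hj : j ≤ T - k) (hk : k ≤ T) :
    ((T : ℝ) - j) * (1 - v2 (j + 1)) = k := by
  rcases hj.lt_or_eq with hlt | rfl
  · have hpos : (0 : ℝ) < T - j := by
      have : j < T := by omega
      rw [sub_pos]; exact_mod_cast this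
    rw [hv2 (j + 1) (by omega) (by omega)]
    push_cast
    rw [show (T : ℝ) - (j + 1) + 1 = T - j by ring]
    field_simp
    ring
  · rw [hv2' _ (by omega), Nat.cast_sub hk]
    ring

lemma v2_le_one {j : ℕ} (hj : 1 ≤ j) : v2 j ≤ 1 := by
  rcases le_or_gt j (T - k) with hle | hgt
  · have hpos : (0 : ℝ) < T - j + 1 := by
      have : (j : ℝ) ≤ T := by exact_mod_cast (by omega : j ≤ T)
      linarith
    rw [hv2 j hj hle, div_le_one hpos]
    linarith [(Nat.cast_nonneg k : (0 : ℝ) ≤ k)]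
  · rw [hv2' j hgt]
    exact zero_le_one

lemma bid_gap_nonneg (x1 x2 : ℕ) (h : x1 + x2 < T) :
    ((T : ℝ) - x1 - x2 - 1) * (1 - v2 (x2 + 2)) ≤ ((T : ℝ) - x1 - x2) * (1 - v2 (x2 + 1)) := by
  rcases lt_or_ge x2 (T - k) with hx2 | hx2
  · set d : ℝ := (T : ℝ) - x2
    have hw1 : d * (1 - v2 (x2 + 1)) = k := sub_mul_one_sub_v2_succ hv2 hv2' hx2.le (by omega)
    have hw2 : (d - 1) * (1 - v2 (x2 + 2)) = k := by
      have := sub_mul_one_sub_v2_succ hv2 hv2' (j := x2 + 1) (by omega) (by omega)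
      push_cast at this
      linarith
    have hd : (0 : ℝ) < d := by
      have : x2 < T := by omega
      simp only [d, sub_pos]; exact_mod_cast this
    have hw2_nonneg : 0 ≤ 1 - v2 (x2 + 2) := by linarith [v2_le_one hv2 hv2' (j := x2 + 2) (by omega)]
    -- multiplying the gap by `d` turns it into `x1 · w(x2 + 2)`
    have hscaled : d * (((T : ℝ) - x1 - x2) * (1 - v2 (x2 + 1)) -
        ((T : ℝ) - x1 - x2 - 1) * (1 - v2 (x2 + 2))) = x1 * (1 - v2 (x2 + 2)) := by
      linear_combination ((T : ℝ) - x1 - x2) * hw1 - ((T : ℝ) - x1 - x2) * hw2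
    have := (mul_nonneg_iff_of_pos_left hd).mp (hscaled ▸ mul_nonneg (Nat.cast_nonneg x1) hw2_nonneg)
    linarith
  · rw [hv2' (x2 + 1) (by omega), hv2' (x2 + 2) (by omega)]
    linarith

end DecreasingValuation

theorem stmt_19_general (T k : ℕ)
    (v1 v2 : ℕ → ℝ)
    (hv1 : ∀ j : ℕ, v1 j = 1)
    (hv2 : ∀ j : ℕ, 1 ≤ j → j ≤ T - k →
      v2 j = ((T : ℝ) - (k : ℝ) - (j : ℝ) + 1) / ((T : ℝ) - (j : ℝ) + 1))
    (hv2' : ∀ j : ℕ, T - k < j → v2 j = 0) :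
    (∀ x1 x2 : ℕ, x1 + x2 ≤ T →
        util T v1 v2 x1 x2 = (((T : ℝ) - (x1 : ℝ) - (x2 : ℝ)) * (1 - v2 (x2 + 1)), 0)) ∧
      ∀ ℓ : ℕ, ℓ < T - k →
        v1 1 + (util T v1 v2 1 ℓ).1 - (util T v1 v2 0 (ℓ + 1)).1
          = v2 (ℓ + 1) + (util T v1 v2 0 (ℓ + 1)).2 - (util T v1 v2 1 ℓ).2 := by
  have hutil := util_eq_of_bid_gap_nonneg hv1 (bid_gap_nonneg hv2 hv2')
  refine ⟨hutil, fun ℓ hℓ => ?_⟩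
  have hgap := bid1_sub_bid2_of_util hv1 (hutil 1 ℓ (by omega)) (hutil 0 (ℓ + 1) (by omega))
  have hw1 := sub_mul_one_sub_v2_succ hv2 hv2' hℓ.le (by omega)
  have hw2 := sub_mul_one_sub_v2_succ hv2 hv2' (j := ℓ + 1) (by omega) (by omega)
  push_cast at hgap hw2
  have htie : bid1 T v1 v2 0 ℓ = bid2 T v1 v2 0 ℓ := by linear_combination hgap + hw1 - hw2
  exact htie

theorem stmt_19 (T k : ℕ) (hT : 1 ≤ T) (hk : k < T)
    (v1 v2 : ℕ → ℝ)
    (hv1 : ∀ j : ℕ, v1 j = 1)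
    (hv2 : ∀ j : ℕ, 1 ≤ j → j ≤ T - k →
      v2 j = ((T : ℝ) - (k : ℝ) - (j : ℝ) + 1) / ((T : ℝ) - (j : ℝ) + 1))
    (hv2' : ∀ j : ℕ, T - k < j → v2 j = 0) :
    (∀ x1 x2 : ℕ, x1 + x2 ≤ T →
        util T v1 v2 x1 x2 = (((T : ℝ) - (x1 : ℝ) - (x2 : ℝ)) * (1 - v2 (x2 + 1)), 0)) ∧
      ∀ ℓ : ℕ, ℓ < T - k →
        v1 1 + (util T v1 v2 1 ℓ).1 - (util T v1 v2 0 (ℓ + 1)).1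
          = v2 (ℓ + 1) + (util T v1 v2 0 (ℓ + 1)).2 - (util T v1 v2 1 ℓ).2 :=
  stmt_19_general T k v1 v2 hv1 hv2 hv2'
end
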